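/- Suppose r(h) < 1 for every safe history h. Let Δ : ℝ → ℝ satisfy 0 ≤ Δ x ≤ 1 for all x ∈ ℝ, and let f be a real-valued function on trajectories such that ser(τ) ≤ Δ(f(τ)) for every safe trajectory τ with p(τ) > 0. Then er(s₀, π) ≤ ∑_{all trajectories τ} p(τ) · Δ(f(τ)). -/

import Mathlib

open Finset
open scoped Classical

noncomputable section

/-- The restriction of a trajectory `τ : Fin (n+1) → S` to its first `t+1` entries. -/
def pre {S : Type*} {n : ℕ} (τ : Fin (n + 1) → S) (t : ℕ) (ht : t + 1 ≤ n + 1) :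
    Fin (t + 1) → S :=
  fun i => τ (Fin.castLE ht i)

/-- The probability of the trajectory `τ` under policy `π`. -/
def prob {S A : Type*} {n : ℕ} (T : S → A → S → ℝ)
    (π : (t : ℕ) → (Fin (t + 1) → S) → A) (τ : Fin (n + 1) → S) : ℝ :=
  ∏ t : Fin n, T (τ t.castSucc) (π t (pre τ t (Nat.succ_le_succ t.isLt.le))) (τ t.succ)

/-- The immediate risk of a history `h` of length `t+1`. -/
def risk {S A : Type*} [Fintype S] (T : S → A → S → ℝ) (C : Set S)
    (π : (t : ℕ) → (Fin (t + 1) → S) → A) {t : ℕ} (h : Fin (t + 1) → S) : ℝ :=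
  ∑ s' ∈ univ.filter (fun s' => s' ∉ C), T (h (Fin.last t)) (π t h) s'

/-- The survival product of a trajectory. -/
def surv {S A : Type*} [Fintype S] {n : ℕ} (T : S → A → S → ℝ) (C : Set S)
    (π : (t : ℕ) → (Fin (t + 1) → S) → A) (τ : Fin (n + 1) → S) : ℝ :=
  ∏ t : Fin n, (1 - risk T C π (pre τ t (Nat.succ_le_succ t.isLt.le)))

/-- The sequence execution risk of a trajectory. -/
def ser {S A : Type*} [Fintype S] {n : ℕ} (T : S → A → S → ℝ) (C : Set S)
    (π : (t : ℕ) → (Fin (t + 1) → S) → A) (τ : Fin (n + 1) → S) : ℝ :=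
  if ∀ i, τ i ∈ C then (1 - surv T C π τ) / surv T C π τ else 0

/-- The execution risk of the policy `π` from the initial state `s₀`. -/
def er {S A : Type*} [Fintype S] (n : ℕ) (T : S → A → S → ℝ) (C : Set S)
    (π : (t : ℕ) → (Fin (t + 1) → S) → A) (s₀ : S) : ℝ :=
  1 - ∑ τ ∈ univ.filter (fun τ : Fin (n + 1) → S => τ 0 = s₀ ∧ ∀ i, τ i ∈ C), prob T π τ

/-!
Dividing each transition probability by the one-step survival probability `1 - r(h)` gives a
kernel that is again stochastic on the safe states, so under it the safe trajectories have total
weight `∑ p(τ) / P(τ) = 1`. Hence `er = ∑_safe (p/P - p) = ∑_safe p · ser`, and the bound follows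
termwise from `ser ≤ Δ ∘ f`, the unsafe trajectories contributing `p · Δ ≥ 0`.
-/

section Paths

variable {S : Type*}

lemma pre_snoc {m : ℕ} (h : Fin (m + 1) → S) (s' : S) (t : ℕ) (ht : t + 1 ≤ m + 1)
    (ht' : t + 1 ≤ m + 2) : pre (Fin.snoc h s' : Fin (m + 2) → S) t ht' = pre h t ht := by
  funext i
  show (Fin.snoc h s' : Fin (m + 2) → S) (Fin.castSucc (Fin.castLE ht i)) = h (Fin.castLE ht i)
  rw [Fin.snoc_castSucc]

lemma pre_self {m : ℕ} (h : Fin (m + 1) → S) (ht : m + 1 ≤ m + 1) : pre h m ht = h := rfl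

def pathWeight (g : (t : ℕ) → (Fin (t + 1) → S) → S → ℝ) {m : ℕ} (h : Fin (m + 1) → S) : ℝ :=
  ∏ t : Fin m, g t (pre h t (Nat.succ_le_succ t.isLt.le)) (h t.succ)

lemma pathWeight_snoc (g : (t : ℕ) → (Fin (t + 1) → S) → S → ℝ) {m : ℕ}
    (h : Fin (m + 1) → S) (s' : S) :
    pathWeight g (Fin.snoc h s' : Fin (m + 2) → S) = pathWeight g h * g m h s' := by
  rw [pathWeight, Fin.prod_univ_castSucc]
  congr 1
  · refine prod_congr rfl fun t _ => ?_
    show g t (pre (Fin.snoc h s' : Fin (m + 2) → S) t _)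
      ((Fin.snoc h s' : Fin (m + 2) → S) t.succ.castSucc) = _
    rw [pre_snoc h s' t (Nat.succ_le_succ t.isLt.le), Fin.snoc_castSucc]
  · show g m (pre (Fin.snoc h s' : Fin (m + 2) → S) m _)
      ((Fin.snoc h s' : Fin (m + 2) → S) (Fin.last (m + 1))) = _
    rw [pre_snoc h s' m le_rfl, pre_self, Fin.snoc_last]

variable [Fintype S]

def safePaths (C : Set S) (s₀ : S) (m : ℕ) : Finset (Fin (m + 1) → S) :=
  univ.filter (fun h => h 0 = s₀ ∧ ∀ i, h i ∈ C)

variable {C : Set S} {s₀ : S}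

lemma snoc_mem_safePaths {m : ℕ} {h : Fin (m + 1) → S} {s' : S} :
    (Fin.snoc h s' : Fin (m + 2) → S) ∈ safePaths C s₀ (m + 1) ↔
      h ∈ safePaths C s₀ m ∧ s' ∈ C := by
  simp only [safePaths, mem_filter, mem_univ, true_and, Fin.forall_iff_castSucc,
    Fin.snoc_last, Fin.snoc_castSucc]
  exact ⟨fun ⟨h0, hs', hC⟩ => ⟨⟨h0, hC⟩, hs'⟩, fun ⟨⟨h0, hC⟩, hs'⟩ => ⟨h0, hs', hC⟩⟩

lemma sum_safePaths_succ {m : ℕ} (F : (Fin (m + 2) → S) → ℝ) :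
    ∑ h ∈ safePaths C s₀ (m + 1), F h
      = ∑ h ∈ safePaths C s₀ m, ∑ s' ∈ univ.filter (· ∈ C), F (Fin.snoc h s') := by
  rw [← sum_product']
  refine sum_nbij' (fun h => (Fin.init h, h (Fin.last _))) (fun p => Fin.snoc p.1 p.2)
    (fun h hh => ?_) (fun p hp => ?_) (fun h _ => Fin.snoc_init_self h)
    (fun p _ => by simp) (fun h _ => by rw [Fin.snoc_init_self])
  · rw [← Fin.snoc_init_self h, snoc_mem_safePaths] at hh
    simpa using hh
  · exact snoc_mem_safePaths.2 (by simpa using hp)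

lemma pre_mem_safePaths {n : ℕ} {τ : Fin (n + 1) → S} (hτ : τ ∈ safePaths C s₀ n) (t : ℕ)
    (ht : t + 1 ≤ n + 1) : pre τ t ht ∈ safePaths C s₀ t := by
  simp only [safePaths, mem_filter, mem_univ, true_and] at hτ ⊢
  exact ⟨hτ.1, fun i => hτ.2 _⟩

theorem sum_pathWeight_safePaths (hs₀ : s₀ ∈ C) (g : (t : ℕ) → (Fin (t + 1) → S) → S → ℝ) :
    ∀ m : ℕ, (∀ t < m, ∀ h ∈ safePaths C s₀ t, ∑ s' ∈ univ.filter (· ∈ C), g t h s' = 1) →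
      ∑ h ∈ safePaths C s₀ m, pathWeight g h = 1
  | 0, _ => by
    have : safePaths C s₀ 0 = {fun _ => s₀} := by
      ext h
      simp only [safePaths, mem_filter, mem_univ, true_and, mem_singleton]
      constructor
      · rintro ⟨h0, -⟩
        funext i
        rwa [show i = 0 from Fin.ext (by omega)]
      · rintro rfl
        exact ⟨rfl, fun _ => hs₀⟩
    simp [this, pathWeight]
  | m + 1, hg => by
    rw [sum_safePaths_succ, ← sum_pathWeight_safePaths hs₀ g m fun t ht => hg t (by omega)]
    refine sum_congr rfl fun h hh => ?_
    simp only [pathWeight_snoc, ← mul_sum, hg m m.lt_succ_self h hh, mul_one]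

end Paths

section ExecutionRisk

variable {S A : Type*} [Fintype S] (T : S → A → S → ℝ) (C : Set S)
  (π : (t : ℕ) → (Fin (t + 1) → S) → A)

lemma sum_mem_eq_one_sub_risk (hT1 : ∀ s a, ∑ s', T s a s' = 1) {t : ℕ}
    (h : Fin (t + 1) → S) :
    ∑ s' ∈ univ.filter (· ∈ C), T (h (Fin.last t)) (π t h) s' = 1 - risk T C π h := by
  rw [risk, ← hT1 (h (Fin.last t)) (π t h), ← sum_filter_add_sum_filter_not univ (· ∈ C)]
  ring

/-- The transition kernel conditioned on the next state being safe. -/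
def safeKernel (t : ℕ) (h : Fin (t + 1) → S) (s' : S) : ℝ :=
  T (h (Fin.last t)) (π t h) s' / (1 - risk T C π h)

lemma sum_mem_safeKernel (hT1 : ∀ s a, ∑ s', T s a s' = 1) {t : ℕ} (h : Fin (t + 1) → S)
    (hr : risk T C π h < 1) : ∑ s' ∈ univ.filter (· ∈ C), safeKernel T C π t h s' = 1 := by
  simp only [safeKernel]
  rw [← sum_div, sum_mem_eq_one_sub_risk T C π hT1, div_self (by linarith)]

lemma prob_eq_pathWeight_safeKernel_mul_surv {n : ℕ} (τ : Fin (n + 1) → S)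
    (hr : ∀ t : Fin n, risk T C π (pre τ t (Nat.succ_le_succ t.isLt.le)) < 1) :
    prob T π τ = pathWeight (safeKernel T C π) τ * surv T C π τ := by
  rw [pathWeight, surv, ← prod_mul_distrib]
  exact prod_congr rfl fun t _ => (div_mul_cancel₀ _ (by linarith [hr t])).symm

variable {C}

theorem er_eq_sum_prob_mul_ser {n : ℕ} {s₀ : S} (hs₀ : s₀ ∈ C)
    (hT1 : ∀ s a, ∑ s', T s a s' = 1)
    (hrisk : ∀ t < n, ∀ h ∈ safePaths C s₀ t, risk T C π h < 1) :
    er n T C π s₀ = ∑ τ ∈ safePaths C s₀ n, prob T π τ * ser T C π τ := by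
  have hW := sum_pathWeight_safePaths hs₀ (safeKernel T C π) n
    fun t ht h hh => sum_mem_safeKernel T C π hT1 h (hrisk t ht h hh)
  have hterm : ∀ τ ∈ safePaths C s₀ n,
      pathWeight (safeKernel T C π) τ - prob T π τ = prob T π τ * ser T C π τ := by
    intro τ hτ
    have hr : ∀ t : Fin n, risk T C π (pre τ t (Nat.succ_le_succ t.isLt.le)) < 1 :=
      fun t => hrisk t t.isLt _ (pre_mem_safePaths hτ _ _)
    have hsurv : surv T C π τ ≠ 0 :=
      (prod_pos fun t _ => sub_pos.2 (hr t)).ne'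
    have hsafe : ∀ i, τ i ∈ C := (mem_filter.1 hτ).2.2
    rw [ser, if_pos hsafe, prob_eq_pathWeight_safeKernel_mul_surv T C π τ hr]
    field_simp
  calc er n T C π s₀
      = ∑ τ ∈ safePaths C s₀ n, pathWeight (safeKernel T C π) τ
          - ∑ τ ∈ safePaths C s₀ n, prob T π τ := by rw [hW]; rfl
    _ = _ := by rw [← sum_sub_distrib]; exact sum_congr rfl hterm

end ExecutionRisk

theorem er_le_expectation_of_compose_general
    {S A : Type*} [Fintype S]
    (n : ℕ)
    (C : Set S) (s₀ : S) (hs₀ : s₀ ∈ C)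
    (T : S → A → S → ℝ)
    (hT0 : ∀ s a s', 0 ≤ T s a s')
    (hT1 : ∀ s a, ∑ s', T s a s' = 1)
    (π : (t : ℕ) → (Fin (t + 1) → S) → A)
    (hrisk : ∀ (t : ℕ), t ≤ n → ∀ h : Fin (t + 1) → S, h 0 = s₀ → (∀ i, h i ∈ C) →
      risk T C π h < 1)
    (Δ : ℝ → ℝ)
    (hΔ0 : ∀ x, 0 ≤ Δ x)
    (f : (Fin (n + 1) → S) → ℝ)
    (hser : ∀ τ : Fin (n + 1) → S, τ 0 = s₀ → (∀ i, τ i ∈ C) → 0 < prob T π τ →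
      ser T C π τ ≤ Δ (f τ)) :
    er n T C π s₀
      ≤ ∑ τ ∈ univ.filter (fun τ : Fin (n + 1) → S => τ 0 = s₀), prob T π τ * Δ (f τ) := by
  have hprob : ∀ τ : Fin (n + 1) → S, 0 ≤ prob T π τ := fun τ => prod_nonneg fun _ _ => hT0 ..
  rw [er_eq_sum_prob_mul_ser T π hs₀ hT1 fun t ht h hh =>
    hrisk t ht.le h (mem_filter.1 hh).2.1 (mem_filter.1 hh).2.2]
  calc ∑ τ ∈ safePaths C s₀ n, prob T π τ * ser T C π τ
      ≤ ∑ τ ∈ safePaths C s₀ n, prob T π τ * Δ (f τ) := by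
        refine sum_le_sum fun τ hτ => ?_
        obtain ⟨-, h0, hsafe⟩ := mem_filter.1 hτ
        rcases (hprob τ).eq_or_lt with hp | hp
        · simp [← hp]
        · exact mul_le_mul_of_nonneg_left (hser τ h0 hsafe hp) hp.le
    _ ≤ _ := sum_le_sum_of_subset_of_nonneg
        (fun τ hτ => mem_filter.2 ⟨mem_univ τ, (mem_filter.1 hτ).2.1⟩)
        fun τ _ _ => mul_nonneg (hprob τ) (hΔ0 _)

/-- First step of the proof of Theorem 1 of the paper: if `ser(τ) ≤ Δ(f(τ))` on safe
trajectories of positive probability and `0 ≤ Δ ≤ 1`, then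
`er(s₀, π) ≤ ∑_τ p(τ) · Δ(f(τ))`. -/
theorem er_le_expectation_of_compose
    {S A : Type*} [Fintype S] [Nonempty S] [Fintype A] [Nonempty A]
    (n : ℕ) (hn : 1 ≤ n)
    (C : Set S) (s₀ : S) (hs₀ : s₀ ∈ C)
    (T : S → A → S → ℝ)
    (hT0 : ∀ s a s', 0 ≤ T s a s')
    (hT1 : ∀ s a, ∑ s', T s a s' = 1)
    (π : (t : ℕ) → (Fin (t + 1) → S) → A)
    (hrisk : ∀ (t : ℕ), t ≤ n → ∀ h : Fin (t + 1) → S, h 0 = s₀ → (∀ i, h i ∈ C) →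
      risk T C π h < 1)
    (Δ : ℝ → ℝ)
    (hΔ0 : ∀ x, 0 ≤ Δ x) (hΔ1 : ∀ x, Δ x ≤ 1)
    (f : (Fin (n + 1) → S) → ℝ)
    (hser : ∀ τ : Fin (n + 1) → S, τ 0 = s₀ → (∀ i, τ i ∈ C) → 0 < prob T π τ →
      ser T C π τ ≤ Δ (f τ)) :
    er n T C π s₀
      ≤ ∑ τ ∈ univ.filter (fun τ : Fin (n + 1) → S => τ 0 = s₀), prob T π τ * Δ (f τ) :=
  er_le_expectation_of_compose_general n C s₀ hs₀ T hT0 hT1 π hrisk Δ hΔ0 f hser
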